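/- Under the hypotheses of the intervention sub-optimality theorem, if for every step the random variable D = Q_h^{π*}(s, π*) − Q_h^{π*}(s, π) (with s drawn from d^{π'}) satisfies the sub-exponential tail bound Pr(D > p) ≤ exp(−(p − μ)/σ) with μ = O(ε_b) and σ = O(ε_b), and the threshold is chosen as p = μ + σ log H, then δ ≤ 1/H and hence J(π*) − J(π) ≤ pH + δ ε_b H² = O(ε_b H log H). -/
import Mathlib


open Finset

noncomputable section

attribute [local instance] Classical.propDecidable

variable {S A : Type*}

/-- `p` is a probability distribution on a finite type. -/
def IsDist {X : Type*} [Fintype X] (p : X → ℝ) : Prop :=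
  (∀ x, 0 ≤ p x) ∧ ∑ x, p x = 1

/-- A (stochastic) policy: a distribution over actions at each state. -/
def IsPolicy [Fintype A] (π : S → A → ℝ) : Prop := ∀ s, IsDist (π s)

/-- A transition kernel. -/
def IsKernel [Fintype S] (P : S → A → S → ℝ) : Prop := ∀ s a, IsDist (P s a)

/-- Total variation distance on a finite type. -/
def tvDist {X : Type*} [Fintype X] (p q : X → ℝ) : ℝ := (1/2) * ∑ x, |p x - q x|

variable [Fintype S] [Fintype A]

/-- Q-value for a (possibly nonstationary) policy `πt` (indexed by time step):
`Qn P r πt k t s a` is the expected reward-to-go with `k` steps remaining, at current time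
step `t`, taking action `a` in state `s` and thereafter following `πt`. -/
def Qn (P : S → A → S → ℝ) (r : S → A → ℝ) (πt : ℕ → S → A → ℝ) :
    ℕ → ℕ → S → A → ℝ
  | 0, _ => fun _ _ => 0
  | k+1, t => fun s a =>
      r s a + ∑ s', P s a s' * ∑ a', πt (t+1) s' a' * Qn P r πt k (t+1) s' a'

/-- Expected Q-value when the first action is drawn from `π''`. -/
def QEn (P : S → A → S → ℝ) (r : S → A → ℝ) (πt : ℕ → S → A → ℝ)
    (k t : ℕ) (s : S) (π'' : S → A → ℝ) : ℝ :=
  ∑ a, π'' s a * Qn P r πt k t s a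

/-- State distribution at (0-indexed) step `h` when following `πt` from initial
distribution `ρ`. -/
def stateDistN (P : S → A → S → ℝ) (ρ : S → ℝ) (πt : ℕ → S → A → ℝ) : ℕ → S → ℝ
  | 0 => ρ
  | h+1 => fun s' => ∑ s, ∑ a, stateDistN P ρ πt h s * πt h s a * P s a s'

/-- Policy value: expected cumulative reward over horizon `H`. -/
def Jn (P : S → A → S → ℝ) (r : S → A → ℝ) (ρ : S → ℝ) (H : ℕ)
    (πt : ℕ → S → A → ℝ) : ℝ :=
  ∑ s, ρ s * QEn P r πt H 0 s (πt 0)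

/-- Stationary-policy Q-value with `k` steps remaining. -/
def Qst (P : S → A → S → ℝ) (r : S → A → ℝ) (π : S → A → ℝ) (k : ℕ) :
    S → A → ℝ := Qn P r (fun _ => π) k 0

/-- Stationary expected Q-value, first action drawn from `π''`. -/
def QE (P : S → A → S → ℝ) (r : S → A → ℝ) (π : S → A → ℝ) (k : ℕ) (s : S)
    (π'' : S → A → ℝ) : ℝ := ∑ a, π'' s a * Qst P r π k s a

/-- State distribution at (0-indexed) step `h` under a stationary policy. -/
def stateDist (P : S → A → S → ℝ) (ρ : S → ℝ) (π : S → A → ℝ) : ℕ → S → ℝ :=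
  stateDistN P ρ (fun _ => π)

/-- Policy value of a stationary policy. -/
def J (P : S → A → S → ℝ) (r : S → A → ℝ) (ρ : S → ℝ) (H : ℕ)
    (π : S → A → ℝ) : ℝ := Jn P r ρ H (fun _ => π)

section AuxProof

variable (P : S → A → S → ℝ) (r : S → A → ℝ)

private lemma Qn_const' (ϖ : S → A → ℝ) :
    ∀ k t, Qn P r (fun _ => ϖ) k t = Qst P r ϖ k := by
  intro k
  induction k with
  | zero => intro t; rfl
  | succ k ih =>
    intro t
    funext s a
    show r s a + ∑ s', P s a s' * ∑ a', ϖ s' a' * Qn P r (fun _ => ϖ) k (t+1) s' a'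
        = r s a + ∑ s', P s a s' * ∑ a', ϖ s' a' * Qn P r (fun _ => ϖ) k (0+1) s' a'
    rw [ih (t+1), ih (0+1)]

private lemma Qst_bounds (hP : IsKernel P) (hr : ∀ s a, 0 ≤ r s a ∧ r s a ≤ 1)
    (ϖ : S → A → ℝ) (hϖ : IsPolicy ϖ) :
    ∀ k s a, 0 ≤ Qst P r ϖ k s a ∧ Qst P r ϖ k s a ≤ k := by
  intro k
  induction k with
  | zero => intro s a; simp [Qst, Qn]
  | succ k ih =>
    intro s a
    have hrec : Qst P r ϖ (k+1) s a
        = r s a + ∑ s', P s a s' * ∑ a', ϖ s' a' * Qst P r ϖ k s' a' := by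
      show r s a + ∑ s', P s a s' * ∑ a', ϖ s' a' * Qn P r (fun _ => ϖ) k (0+1) s' a' = _
      rw [Qn_const' P r ϖ k (0+1)]
    have hin : ∀ s', 0 ≤ (∑ a', ϖ s' a' * Qst P r ϖ k s' a')
        ∧ (∑ a', ϖ s' a' * Qst P r ϖ k s' a') ≤ k := by
      intro s'
      constructor
      · exact Finset.sum_nonneg fun a' _ =>
          mul_nonneg ((hϖ s').1 a') (ih s' a').1
      · calc ∑ a', ϖ s' a' * Qst P r ϖ k s' a' ≤ ∑ a', ϖ s' a' * k :=
              Finset.sum_le_sum fun a' _ =>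
                mul_le_mul_of_nonneg_left (ih s' a').2 ((hϖ s').1 a')
          _ = k := by rw [← Finset.sum_mul, (hϖ s').2, one_mul]
    constructor
    · rw [hrec]
      have : 0 ≤ ∑ s', P s a s' * ∑ a', ϖ s' a' * Qst P r ϖ k s' a' :=
        Finset.sum_nonneg fun s' _ => mul_nonneg ((hP s a).1 s') (hin s').1
      linarith [(hr s a).1]
    · rw [hrec]
      have : ∑ s', P s a s' * ∑ a', ϖ s' a' * Qst P r ϖ k s' a'
          ≤ ∑ s', P s a s' * k :=
        Finset.sum_le_sum fun s' _ =>
          mul_le_mul_of_nonneg_left (hin s').2 ((hP s a).1 s')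
      have h2 : ∑ s', P s a s' * (k:ℝ) = k := by
        rw [← Finset.sum_mul, (hP s a).2, one_mul]
      push_cast
      linarith [(hr s a).2]

private lemma QE_bounds (hP : IsKernel P) (hr : ∀ s a, 0 ≤ r s a ∧ r s a ≤ 1)
    (ϖ : S → A → ℝ) (hϖ : IsPolicy ϖ) (k : ℕ) (s : S)
    (π'' : S → A → ℝ) (hπ'' : IsDist (π'' s)) :
    0 ≤ QE P r ϖ k s π'' ∧ QE P r ϖ k s π'' ≤ k := by
  constructor
  · exact Finset.sum_nonneg fun a _ =>
      mul_nonneg (hπ''.1 a) (Qst_bounds P r hP hr ϖ hϖ k s a).1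
  · calc QE P r ϖ k s π'' ≤ ∑ a, π'' s a * k :=
        Finset.sum_le_sum fun a _ =>
          mul_le_mul_of_nonneg_left (Qst_bounds P r hP hr ϖ hϖ k s a).2 (hπ''.1 a)
      _ = k := by rw [← Finset.sum_mul, hπ''.2, one_mul]

private lemma stateDistN_dist (hP : IsKernel P) (ρ : S → ℝ) (hρ : IsDist ρ)
    (πt : ℕ → S → A → ℝ) (hπt : ∀ h, IsPolicy (πt h)) :
    ∀ h, (∀ s, 0 ≤ stateDistN P ρ πt h s) ∧ ∑ s, stateDistN P ρ πt h s = 1 := by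
  intro h
  induction h with
  | zero => exact ⟨hρ.1, hρ.2⟩
  | succ h ih =>
    constructor
    · intro s'
      exact Finset.sum_nonneg fun s _ => Finset.sum_nonneg fun a _ =>
        mul_nonneg (mul_nonneg (ih.1 s) ((hπt h s).1 a)) ((hP s a).1 s')
    · show ∑ s', ∑ s, ∑ a, stateDistN P ρ πt h s * πt h s a * P s a s' = 1
      rw [Finset.sum_comm]
      have : ∀ s, ∑ s', ∑ a, stateDistN P ρ πt h s * πt h s a * P s a s'
          = stateDistN P ρ πt h s := by
        intro s
        rw [Finset.sum_comm]
        have : ∀ a, ∑ s', stateDistN P ρ πt h s * πt h s a * P s a s'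
            = stateDistN P ρ πt h s * πt h s a := by
          intro a
          rw [← Finset.mul_sum, (hP s a).2, mul_one]
        rw [Finset.sum_congr rfl fun a _ => this a, ← Finset.mul_sum,
          (hπt h s).2, mul_one]
      rw [Finset.sum_congr rfl fun s _ => this s, ih.2]

private lemma exchange_sum (d : S → ℝ) (π'' : S → A → ℝ) (g : S → ℝ) :
    ∑ s, d s * ∑ a, π'' s a * ∑ s', P s a s' * g s'
      = ∑ s', (∑ s, ∑ a, d s * π'' s a * P s a s') * g s' := by
  calc ∑ s, d s * ∑ a, π'' s a * ∑ s', P s a s' * g s'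
      = ∑ s, ∑ a, ∑ s', d s * π'' s a * P s a s' * g s' := by
        refine Finset.sum_congr rfl fun s _ => ?_
        rw [Finset.mul_sum]
        refine Finset.sum_congr rfl fun a _ => ?_
        rw [← mul_assoc, Finset.mul_sum]
        exact Finset.sum_congr rfl fun s' _ => by ring
    _ = ∑ s, ∑ s', ∑ a, d s * π'' s a * P s a s' * g s' :=
        Finset.sum_congr rfl fun s _ => Finset.sum_comm
    _ = ∑ s', ∑ s, ∑ a, d s * π'' s a * P s a s' * g s' := Finset.sum_comm
    _ = ∑ s', (∑ s, ∑ a, d s * π'' s a * P s a s') * g s' := by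
        refine Finset.sum_congr rfl fun s' _ => ?_
        rw [Finset.sum_mul]
        refine Finset.sum_congr rfl fun s _ => ?_
        rw [Finset.sum_mul]

private lemma value_eq_rewards (ρ : S → ℝ) (πt : ℕ → S → A → ℝ) :
    ∀ k h, ∑ s, stateDistN P ρ πt h s * QEn P r πt k h s (πt h)
      = ∑ i ∈ Finset.range k,
          ∑ s, stateDistN P ρ πt (h+i) s * ∑ a, πt (h+i) s a * r s a := by
  intro k
  induction k with
  | zero => intro h; simp [QEn, Qn]
  | succ k ih =>
    intro h
    have hQ : ∀ s, QEn P r πt (k+1) h s (πt h)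
        = (∑ a, πt h s a * r s a)
          + ∑ a, πt h s a * ∑ s', P s a s' * QEn P r πt k (h+1) s' (πt (h+1)) := by
      intro s
      simp only [QEn, Qn, mul_add, Finset.sum_add_distrib]
    have hstep : ∑ s, stateDistN P ρ πt h s * QEn P r πt (k+1) h s (πt h)
        = (∑ s, stateDistN P ρ πt h s * ∑ a, πt h s a * r s a)
          + ∑ s', stateDistN P ρ πt (h+1) s' * QEn P r πt k (h+1) s' (πt (h+1)) := by
      have h2 : ∑ s, stateDistN P ρ πt h s * QEn P r πt (k+1) h s (πt h)
          = ∑ s, (stateDistN P ρ πt h s * ∑ a, πt h s a * r s a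
            + stateDistN P ρ πt h s * ∑ a, πt h s a *
              ∑ s', P s a s' * QEn P r πt k (h+1) s' (πt (h+1))) := by
        refine Finset.sum_congr rfl fun s _ => ?_
        rw [hQ s, mul_add]
      rw [h2, Finset.sum_add_distrib]
      congr 1
      rw [exchange_sum]
      rfl
    rw [hstep, ih (h+1), Finset.sum_range_succ']
    have hidx : ∀ i : ℕ, h + 1 + i = h + (i + 1) := fun i => by omega
    simp only [hidx, add_zero]
    exact add_comm _ _

private lemma step_eq (ρ : S → ℝ) (πt : ℕ → S → A → ℝ) (ϖ : S → A → ℝ)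
    (k h : ℕ) :
    ∑ s, stateDistN P ρ πt h s * QE P r ϖ (k+1) s (πt h)
      = (∑ s, stateDistN P ρ πt h s * ∑ a, πt h s a * r s a)
        + ∑ s', stateDistN P ρ πt (h+1) s' * QE P r ϖ k s' ϖ := by
  have hQ : ∀ s, QE P r ϖ (k+1) s (πt h)
      = (∑ a, πt h s a * r s a)
        + ∑ a, πt h s a * ∑ s', P s a s' * QE P r ϖ k s' ϖ := by
    intro s
    have hQst : ∀ a, Qst P r ϖ (k+1) s a
        = r s a + ∑ s', P s a s' * QE P r ϖ k s' ϖ := by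
      intro a
      show r s a + ∑ s', P s a s' * ∑ a', ϖ s' a' * Qn P r (fun _ => ϖ) k (0+1) s' a' = _
      rw [Qn_const' P r ϖ k (0+1)]
      rfl
    show ∑ a, πt h s a * Qst P r ϖ (k+1) s a = _
    calc ∑ a, πt h s a * Qst P r ϖ (k+1) s a
        = ∑ a, (πt h s a * r s a
            + πt h s a * ∑ s', P s a s' * QE P r ϖ k s' ϖ) := by
          refine Finset.sum_congr rfl fun a _ => ?_
          rw [hQst a, mul_add]
      _ = _ := by rw [Finset.sum_add_distrib]
  have h2 : ∑ s, stateDistN P ρ πt h s * QE P r ϖ (k+1) s (πt h)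
      = ∑ s, (stateDistN P ρ πt h s * ∑ a, πt h s a * r s a
        + stateDistN P ρ πt h s * ∑ a, πt h s a *
          ∑ s', P s a s' * QE P r ϖ k s' ϖ) := by
    refine Finset.sum_congr rfl fun s _ => ?_
    rw [hQ s, mul_add]
  rw [h2, Finset.sum_add_distrib]
  congr 1
  rw [exchange_sum]
  rfl

private lemma pdl (ρ : S → ℝ) (H : ℕ) (πt : ℕ → S → A → ℝ) (ϖ : S → A → ℝ) :
    Jn P r ρ H πt - J P r ρ H ϖ
      = ∑ h ∈ Finset.range H, ∑ s, stateDistN P ρ πt h s *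
          (QE P r ϖ (H-h) s (πt h) - QE P r ϖ (H-h) s ϖ) := by
  set W : ℕ → ℝ := fun h => ∑ s, stateDistN P ρ πt h s * QE P r ϖ (H-h) s ϖ with hW
  have hWH : W H = 0 := by
    simp only [hW, Nat.sub_self]
    have : ∀ s : S, QE P r ϖ 0 s ϖ = 0 := by
      intro s
      show ∑ a, ϖ s a * Qst P r ϖ 0 s a = 0
      have : ∀ a : A, Qst P r ϖ 0 s a = 0 := fun a => rfl
      simp [this]
    simp [this]
  have hW0 : W 0 = J P r ρ H ϖ := by
    simp only [hW, Nat.sub_zero]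
    rfl
  have hJn : Jn P r ρ H πt
      = ∑ h ∈ Finset.range H, ∑ s, stateDistN P ρ πt h s * ∑ a, πt h s a * r s a := by
    have hv := value_eq_rewards P r ρ πt H 0
    simp only [zero_add] at hv
    calc Jn P r ρ H πt
        = ∑ s, stateDistN P ρ πt 0 s * QEn P r πt H 0 s (πt 0) := rfl
      _ = _ := hv
  have hterm : ∀ h ∈ Finset.range H,
      ∑ s, stateDistN P ρ πt h s *
          (QE P r ϖ (H-h) s (πt h) - QE P r ϖ (H-h) s ϖ)
        = (∑ s, stateDistN P ρ πt h s * ∑ a, πt h s a * r s a)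
            + (W (h+1) - W h) := by
    intro h hh
    rw [Finset.mem_range] at hh
    have hk : H - h = (H - (h+1)) + 1 := by omega
    have hse := step_eq P r ρ πt ϖ (H - (h+1)) h
    have hWh1 : W (h+1) = ∑ s', stateDistN P ρ πt (h+1) s' * QE P r ϖ (H-(h+1)) s' ϖ := by
      simp only [hW]
    have hWh : W h = ∑ s, stateDistN P ρ πt h s * QE P r ϖ ((H-(h+1))+1) s ϖ := by
      simp only [hW, ← hk]
    calc ∑ s, stateDistN P ρ πt h s *
          (QE P r ϖ (H-h) s (πt h) - QE P r ϖ (H-h) s ϖ)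
        = (∑ s, stateDistN P ρ πt h s * QE P r ϖ ((H-(h+1))+1) s (πt h))
            - ∑ s, stateDistN P ρ πt h s * QE P r ϖ ((H-(h+1))+1) s ϖ := by
          rw [hk]
          simp only [mul_sub, Finset.sum_sub_distrib]
      _ = (∑ s, stateDistN P ρ πt h s * ∑ a, πt h s a * r s a)
            + (W (h+1) - W h) := by
          rw [hse, hWh1, hWh]
          ring
  rw [Finset.sum_congr rfl hterm, Finset.sum_add_distrib, Finset.sum_range_sub,
    hWH, hW0, hJn]
  ring

end AuxProof
/-- Sub-exponential corollary: with tail bound `Pr(D > q) ≤ exp(−(q−μ)/σ)`, `μ,σ = O(ε_b)`,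
and threshold `p = μ + σ log H`, we get `δ ≤ 1/H` and `J(π*) − J(π) = O(ε_b H log H)`. -/
theorem intervention_subexponential
    (P : S → A → S → ℝ) (r : S → A → ℝ) (ρ : S → ℝ) (H : ℕ) (hH : 1 ≤ H)
    (hP : IsKernel P) (hρ : IsDist ρ) (hr : ∀ s a, 0 ≤ r s a ∧ r s a ≤ 1)
    (πstar π : S → A → ℝ) (hstar : IsPolicy πstar) (hπ : IsPolicy π)
    (εb c μ σ p : ℝ) (hεb : 0 ≤ εb) (hc : 0 ≤ c)
    (hμ : 0 ≤ μ) (hμc : μ ≤ c * εb) (hσ : 0 < σ) (hσc : σ ≤ c * εb)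
    (hpdef : p = μ + σ * Real.log H)
    (π' : ℕ → S → A → ℝ)
    (hπ' : ∀ h s, π' h s =
      if p < QE P r πstar (H - h) s πstar - QE P r πstar (H - h) s π
      then πstar s else π s)
    (htail : ∀ q : ℝ, μ ≤ q →
      (1 / (H : ℝ)) * ∑ h ∈ Finset.range H, ∑ s, stateDistN P ρ π' h s *
        (if q < QE P r πstar (H - h) s πstar - QE P r πstar (H - h) s π then 1 else 0)
      ≤ Real.exp (-(q - μ) / σ))
    (δ : ℝ)
    (hδ : δ = (1 / (H : ℝ)) * ∑ h ∈ Finset.range H, ∑ s, stateDistN P ρ π' h s *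
      (if p < QE P r πstar (H - h) s πstar - QE P r πstar (H - h) s π then 1 else 0))
    (β : S → ℝ)
    (hβ : ∀ s, β s = (1 / ((H : ℝ) * δ)) * ∑ h ∈ Finset.range H,
      (if π' h s ≠ π s then 1 else 0) * stateDistN P ρ π' h s)
    (hloss : ∑ s, β s * (if π s ≠ πstar s then 1 else 0) ≤ εb) :
    δ ≤ 1 / (H : ℝ) ∧
    J P r ρ H πstar - J P r ρ H π ≤ p * H + δ * εb * (H : ℝ)^2 ∧
    p * H + δ * εb * (H : ℝ)^2 ≤ (c + 1) * εb * H * (1 + Real.log H) := by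
  have hH1 : (1:ℝ) ≤ (H:ℝ) := by exact_mod_cast hH
  have hH0 : (0:ℝ) < (H:ℝ) := by linarith
  have hlog : 0 ≤ Real.log H := Real.log_nonneg hH1
  have hμp : μ ≤ p := by
    rw [hpdef]; nlinarith [mul_nonneg hσ.le hlog]
  have hp0 : 0 ≤ p := hμ.trans hμp
  -- Part 1: δ ≤ 1/H
  have hδ1 : δ ≤ 1 / (H:ℝ) := by
    rw [hδ]
    refine le_trans (htail p hμp) ?_
    have hx : -(p - μ) / σ = -Real.log H := by
      rw [hpdef]; field_simp; ring
    rw [hx, Real.exp_neg, Real.exp_log hH0, one_div]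
  -- π' is a policy at each step
  have hπ'pol : ∀ h, IsPolicy (π' h) := by
    intro h s
    rw [hπ' h s]
    split
    · exact hstar s
    · exact hπ s
  have hd := stateDistN_dist P hP ρ hρ π' hπ'pol
  have hδ0 : 0 ≤ δ := by
    rw [hδ]
    refine mul_nonneg (by positivity) ?_
    refine Finset.sum_nonneg fun h _ => Finset.sum_nonneg fun s _ => ?_
    refine mul_nonneg ((hd h).1 s) ?_
    split <;> norm_num
  -- key bound: total intervention mass is at most H δ ε_b
  have hK : ∑ h ∈ Finset.range H, ∑ s, stateDistN P ρ π' h s *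
      (if π' h s ≠ π s then (1:ℝ) else 0) ≤ (H:ℝ) * δ * εb := by
    by_cases hδz : δ = 0
    · -- no interventions at all
      have hsum0 : ∑ h ∈ Finset.range H, ∑ s, stateDistN P ρ π' h s *
          (if p < QE P r πstar (H - h) s πstar - QE P r πstar (H - h) s π
            then (1:ℝ) else 0) = 0 := by
        have hs : (H:ℝ) * δ = ∑ h ∈ Finset.range H, ∑ s, stateDistN P ρ π' h s *
            (if p < QE P r πstar (H - h) s πstar - QE P r πstar (H - h) s π
              then (1:ℝ) else 0) := by
          rw [hδ, ← mul_assoc, mul_one_div, div_self hH0.ne', one_mul]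
        rw [hδz, mul_zero] at hs
        exact hs.symm
      have hnn : ∀ h ∈ Finset.range H, ∀ s : S, 0 ≤ stateDistN P ρ π' h s *
          (if p < QE P r πstar (H - h) s πstar - QE P r πstar (H - h) s π
            then (1:ℝ) else 0) := by
        intro h _ s
        refine mul_nonneg ((hd h).1 s) ?_
        split <;> norm_num
      have hz : ∀ h ∈ Finset.range H, ∀ s : S, stateDistN P ρ π' h s *
          (if p < QE P r πstar (H - h) s πstar - QE P r πstar (H - h) s π
            then (1:ℝ) else 0) = 0 := by
        intro h hh s
        have houter := (Finset.sum_eq_zero_iff_of_nonneg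
          (fun h hh => Finset.sum_nonneg fun s _ => hnn h hh s)).mp hsum0 h hh
        exact (Finset.sum_eq_zero_iff_of_nonneg
          (fun s hs => hnn h hh s)).mp houter s (Finset.mem_univ s)
      have : ∑ h ∈ Finset.range H, ∑ s, stateDistN P ρ π' h s *
          (if π' h s ≠ π s then (1:ℝ) else 0) = 0 := by
        refine Finset.sum_eq_zero fun h hh => Finset.sum_eq_zero fun s _ => ?_
        by_cases hne : π' h s ≠ π s
        · have hcond : p < QE P r πstar (H - h) s πstar - QE P r πstar (H - h) s π := by
            by_contra hng
            exact hne (by rw [hπ' h s, if_neg hng])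
          have := hz h hh s
          rw [if_pos hcond, mul_one] at this
          rw [this, zero_mul]
        · rw [if_neg hne, mul_zero]
      rw [this, hδz]
      simp
    · have hδpos : 0 < δ := lt_of_le_of_ne hδ0 (Ne.symm hδz)
      have hHδ : 0 < (H:ℝ) * δ := mul_pos hH0 hδpos
      -- rewrite hloss
      simp only [hβ] at hloss
      have h1 : ∀ h s, (if π' h s ≠ π s then (1:ℝ) else 0) * stateDistN P ρ π' h s *
          (if π s ≠ πstar s then (1:ℝ) else 0)
          = stateDistN P ρ π' h s * (if π' h s ≠ π s then (1:ℝ) else 0) := by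
        intro h s
        by_cases hne : π' h s ≠ π s
        · have hne2 : π s ≠ πstar s := by
            intro heq
            apply hne
            rw [hπ' h s]
            split
            · rw [heq]
            · rfl
          simp [hne, hne2, mul_comm]
        · simp [hne]
      have h2 : ∑ s, ((1 / ((H:ℝ) * δ)) * ∑ h ∈ Finset.range H,
          (if π' h s ≠ π s then (1:ℝ) else 0) * stateDistN P ρ π' h s) *
          (if π s ≠ πstar s then (1:ℝ) else 0)
          = (1 / ((H:ℝ) * δ)) * ∑ h ∈ Finset.range H, ∑ s, stateDistN P ρ π' h s *
            (if π' h s ≠ π s then (1:ℝ) else 0) := by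
        have e1 : ∀ s : S, ((1 / ((H:ℝ) * δ)) * ∑ h ∈ Finset.range H,
            (if π' h s ≠ π s then (1:ℝ) else 0) * stateDistN P ρ π' h s) *
            (if π s ≠ πstar s then (1:ℝ) else 0)
            = (1 / ((H:ℝ) * δ)) * ∑ h ∈ Finset.range H,
              stateDistN P ρ π' h s * (if π' h s ≠ π s then (1:ℝ) else 0) := by
          intro s
          rw [mul_assoc, Finset.sum_mul]
          congr 1
          exact Finset.sum_congr rfl fun h _ => h1 h s
        rw [Finset.sum_congr rfl fun s _ => e1 s, ← Finset.mul_sum]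
        congr 1
        exact Finset.sum_comm
      rw [h2] at hloss
      have hT := mul_le_mul_of_nonneg_left hloss hHδ.le
      have hid : ((H:ℝ) * δ) * ((1 / ((H:ℝ) * δ)) * ∑ h ∈ Finset.range H, ∑ s,
          stateDistN P ρ π' h s * (if π' h s ≠ π s then (1:ℝ) else 0))
          = ∑ h ∈ Finset.range H, ∑ s, stateDistN P ρ π' h s *
            (if π' h s ≠ π s then (1:ℝ) else 0) := by
        field_simp
      rw [hid] at hT
      linarith
  -- performance difference bounds
  have hpdl1 := pdl P r ρ H π' πstar
  have hpdl2 := pdl P r ρ H π' π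
  have hB1 : J P r ρ H πstar - Jn P r ρ H π' ≤ p * (H:ℝ) := by
    have hneg : ∑ h ∈ Finset.range H, ∑ s, stateDistN P ρ π' h s *
        (QE P r πstar (H-h) s πstar - QE P r πstar (H-h) s (π' h))
        = -(∑ h ∈ Finset.range H, ∑ s, stateDistN P ρ π' h s *
          (QE P r πstar (H-h) s (π' h) - QE P r πstar (H-h) s πstar)) := by
      rw [← Finset.sum_neg_distrib]
      refine Finset.sum_congr rfl fun h _ => ?_
      rw [← Finset.sum_neg_distrib]
      refine Finset.sum_congr rfl fun s _ => by ring
    have hbound : ∑ h ∈ Finset.range H, ∑ s, stateDistN P ρ π' h s *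
        (QE P r πstar (H-h) s πstar - QE P r πstar (H-h) s (π' h)) ≤ p * (H:ℝ) := by
      have hterm : ∀ h ∈ Finset.range H, ∑ s, stateDistN P ρ π' h s *
          (QE P r πstar (H-h) s πstar - QE P r πstar (H-h) s (π' h)) ≤ p := by
        intro h _
        have hper : ∀ s : S, stateDistN P ρ π' h s *
            (QE P r πstar (H-h) s πstar - QE P r πstar (H-h) s (π' h))
            ≤ stateDistN P ρ π' h s * p := by
          intro s
          by_cases hc2 : p < QE P r πstar (H-h) s πstar - QE P r πstar (H-h) s π
          · have heq : π' h s = πstar s := by rw [hπ' h s, if_pos hc2]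
            have hQe : QE P r πstar (H-h) s (π' h) = QE P r πstar (H-h) s πstar := by
              simp only [QE, heq]
            rw [hQe, sub_self, mul_zero]
            exact mul_nonneg ((hd h).1 s) hp0
          · have heq : π' h s = π s := by rw [hπ' h s, if_neg hc2]
            have hQe : QE P r πstar (H-h) s (π' h) = QE P r πstar (H-h) s π := by
              simp only [QE, heq]
            rw [hQe]
            exact mul_le_mul_of_nonneg_left (not_lt.mp hc2) ((hd h).1 s)
        calc ∑ s, stateDistN P ρ π' h s *
              (QE P r πstar (H-h) s πstar - QE P r πstar (H-h) s (π' h))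
            ≤ ∑ s, stateDistN P ρ π' h s * p :=
              Finset.sum_le_sum fun s _ => hper s
          _ = p := by rw [← Finset.sum_mul, (hd h).2, one_mul]
      calc ∑ h ∈ Finset.range H, ∑ s, stateDistN P ρ π' h s *
            (QE P r πstar (H-h) s πstar - QE P r πstar (H-h) s (π' h))
          ≤ ∑ _h ∈ Finset.range H, p := Finset.sum_le_sum hterm
        _ = p * (H:ℝ) := by
            rw [Finset.sum_const, Finset.card_range, nsmul_eq_mul, mul_comm]
    rw [hneg] at hbound
    linarith
  have hB2 : Jn P r ρ H π' - J P r ρ H π ≤ δ * εb * (H:ℝ)^2 := by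
    rw [hpdl2]
    have hterm : ∀ h ∈ Finset.range H, ∀ s : S, stateDistN P ρ π' h s *
        (QE P r π (H-h) s (π' h) - QE P r π (H-h) s π)
        ≤ (stateDistN P ρ π' h s * (if π' h s ≠ π s then (1:ℝ) else 0)) * (H:ℝ) := by
      intro h _ s
      by_cases hne : π' h s ≠ π s
      · rw [if_pos hne, mul_one]
        have hub := (QE_bounds P r hP hr π hπ (H-h) s (π' h) (hπ'pol h s)).2
        have hlb := (QE_bounds P r hP hr π hπ (H-h) s π (hπ s)).1
        have hcast : ((H-h : ℕ) : ℝ) ≤ (H:ℝ) := by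
          exact_mod_cast Nat.sub_le H h
        have : QE P r π (H-h) s (π' h) - QE P r π (H-h) s π ≤ (H:ℝ) := by linarith
        exact mul_le_mul_of_nonneg_left this ((hd h).1 s)
      · rw [if_neg hne, mul_zero, zero_mul]
        push_neg at hne
        have hQe : QE P r π (H-h) s (π' h) = QE P r π (H-h) s π := by
          simp only [QE, hne]
        rw [hQe, sub_self, mul_zero]
    calc ∑ h ∈ Finset.range H, ∑ s, stateDistN P ρ π' h s *
          (QE P r π (H-h) s (π' h) - QE P r π (H-h) s π)
        ≤ ∑ h ∈ Finset.range H, ∑ s,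
            (stateDistN P ρ π' h s * (if π' h s ≠ π s then (1:ℝ) else 0)) * (H:ℝ) :=
          Finset.sum_le_sum fun h hh => Finset.sum_le_sum fun s _ => hterm h hh s
      _ = (∑ h ∈ Finset.range H, ∑ s,
            stateDistN P ρ π' h s * (if π' h s ≠ π s then (1:ℝ) else 0)) * (H:ℝ) := by
          rw [Finset.sum_mul]
          exact Finset.sum_congr rfl fun h _ => by rw [Finset.sum_mul]
      _ ≤ ((H:ℝ) * δ * εb) * (H:ℝ) := mul_le_mul_of_nonneg_right hK hH0.le
      _ = δ * εb * (H:ℝ)^2 := by ring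
  refine ⟨hδ1, ?_, ?_⟩
  · linarith
  · have hpb : p ≤ c * εb * (1 + Real.log H) := by
      rw [hpdef]
      nlinarith [mul_le_mul_of_nonneg_right hσc hlog]
    have h5 : p * (H:ℝ) ≤ c * εb * (1 + Real.log H) * (H:ℝ) :=
      mul_le_mul_of_nonneg_right hpb hH0.le
    have h3 : δ * εb * (H:ℝ)^2 ≤ εb * (H:ℝ) := by
      have h6 : δ * (H:ℝ)^2 ≤ (1/(H:ℝ)) * (H:ℝ)^2 :=
        mul_le_mul_of_nonneg_right hδ1 (by positivity)
      have h7 : (1/(H:ℝ)) * (H:ℝ)^2 = (H:ℝ) := by field_simp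
      nlinarith
    nlinarith [mul_nonneg hεb (mul_nonneg hH0.le hlog)]
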